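/- Let D = pdiag(d_1,…,d_n) be a pseudo-diagonal matrix with d_1 ≤ … ≤ d_n and n ≥ 2. If n = 2 and d_2 < 0, then attr(D) = {x ∈ (ℝ∪{−∞})^2 : x_1 = x_2}, and in particular D is not strongly stable. In all other cases (n ≥ 3, or n = 2 with d_2 ≥ 0), D is strongly stable, i.e., attr(D) = (ℝ∪{−∞})^n. -/

import Mathlib

open Finset

/-- Max-plus product of a real matrix with a vector over `ℝ ∪ {−∞}` (modelled as
`WithBot ℝ`, where `⊥ = −∞` is absorbing under addition):
`(A ⊗ x) i = max_j (A i j + x j)`. -/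
noncomputable def mpMulVec {n : ℕ} [NeZero n] (A : Fin n → Fin n → ℝ)
    (x : Fin n → WithBot ℝ) : Fin n → WithBot ℝ :=
  fun i => univ.sup' univ_nonempty fun j => (A i j : WithBot ℝ) + x j

/-- `V(A)`: the set consisting of the all-`−∞` vector together with all eigenvectors of `A`,
i.e. vectors `x ≠ ε` with `A ⊗ x = λ ⊗ x` for some `λ ∈ ℝ ∪ {−∞}`. -/
noncomputable def eigenSet {n : ℕ} [NeZero n] (A : Fin n → Fin n → ℝ) :
    Set (Fin n → WithBot ℝ) :=
  {x | x = (fun _ => ⊥) ∨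
    (x ≠ (fun _ => ⊥) ∧ ∃ l : WithBot ℝ, ∀ i, mpMulVec A x i = l + x i)}

/-- `attr(A)`: vectors `x` such that `A^k ⊗ x ∈ V(A)` for some integer `k ≥ 0`. -/
noncomputable def attrSet {n : ℕ} [NeZero n] (A : Fin n → Fin n → ℝ) :
    Set (Fin n → WithBot ℝ) :=
  {x | ∃ k : ℕ, (mpMulVec A)^[k] x ∈ eigenSet A}

/-
Off the diagonal `pdiag d` has zeros, so `(D ⊗ x)ᵢ = max (dᵢ + xᵢ) (max_{j ≠ i} xⱼ)`, and one
step makes every vector other than `ε` real. If all `dᵢ ≤ 0` and either `n ≥ 3` or some `dᵢ = 0`,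
two steps turn `x` into the constant vector `max x`, which is fixed. If `μ = max d > 0`, the
coordinates with `dᵢ = μ` grow at rate `μ` while the maximum grows more slowly, until it is
attained at one of them; from then on `(D^(k+1) ⊗ x)ⱼ = max (xⱼ + (k + 1) dⱼ) (max x + k μ)`,
an eigenvector with eigenvalue `μ` once `k` is large. For `n = 2` and `d < 0`, `D` reverses the
order of two unequal coordinates, which no eigenvector can do, while constant vectors are fixed.
-/

open Filter Topology

section

variable {n : ℕ} [NeZero n]

noncomputable def mpMulVecReal (A : Fin n → Fin n → ℝ) (x : Fin n → ℝ) : Fin n → ℝ :=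
  fun i => univ.sup' univ_nonempty fun j => A i j + x j

noncomputable def maxCoord (x : Fin n → ℝ) : ℝ := univ.sup' univ_nonempty x

lemma le_maxCoord (x : Fin n → ℝ) (j : Fin n) : x j ≤ maxCoord x := le_sup' x (mem_univ j)

lemma maxCoord_le {x : Fin n → ℝ} {c : ℝ} (h : ∀ j, x j ≤ c) : maxCoord x ≤ c :=
  sup'_le _ _ fun j _ => h j

lemma exists_eq_maxCoord (x : Fin n → ℝ) : ∃ j, x j = maxCoord x := by
  obtain ⟨j, -, hj⟩ := exists_mem_eq_sup' univ_nonempty x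
  exact ⟨j, hj.symm⟩

lemma maxCoord_eq_of_le {x : Fin n → ℝ} {c : ℝ} (h : ∀ j, x j ≤ c) {j : Fin n} (hj : x j = c) :
    maxCoord x = c :=
  (maxCoord_le h).antisymm (hj ▸ le_maxCoord x j)

def pdiag (d : Fin n → ℝ) : Fin n → Fin n → ℝ := fun i j => if i = j then d i else 0

section PseudoDiagonal

variable {d : Fin n → ℝ} {x : Fin n → ℝ}

lemma add_le_mpMulVecReal_pdiag (i : Fin n) : d i + x i ≤ mpMulVecReal (pdiag d) x i :=
  le_sup'_of_le _ (mem_univ i) (by simp [pdiag])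

lemma le_mpMulVecReal_pdiag_of_ne {i j : Fin n} (hij : i ≠ j) :
    x j ≤ mpMulVecReal (pdiag d) x i :=
  le_sup'_of_le _ (mem_univ j) (by simp [pdiag, hij])

lemma mpMulVecReal_pdiag_le (i : Fin n) :
    mpMulVecReal (pdiag d) x i ≤ max (d i + x i) (maxCoord x) := by
  refine sup'_le _ _ fun j _ => ?_
  by_cases hij : i = j
  · subst hij
    simp [pdiag]
  · simpa [pdiag, hij] using le_max_of_le_right (le_maxCoord x j)

lemma add_mul_le_iterate_mpMulVecReal_pdiag (k : ℕ) (i : Fin n) :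
    x i + k * d i ≤ (mpMulVecReal (pdiag d))^[k] x i := by
  induction k with
  | zero => simp
  | succ k ih =>
    rw [Function.iterate_succ_apply']
    push_cast
    linarith [add_le_mpMulVecReal_pdiag (d := d) (x := (mpMulVecReal (pdiag d))^[k] x) i]

lemma mpMulVecReal_pdiag_le_maxCoord (hd : ∀ i, d i ≤ 0) (i : Fin n) :
    mpMulVecReal (pdiag d) x i ≤ maxCoord x :=
  (mpMulVecReal_pdiag_le i).trans (max_le (by linarith [hd i, le_maxCoord x i]) le_rfl)

lemma mpMulVecReal_pdiag_eq_maxCoord_of_ne (hd : ∀ i, d i ≤ 0) {i j : Fin n} (hij : i ≠ j)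
    (hi : x i = maxCoord x) : mpMulVecReal (pdiag d) x j = maxCoord x :=
  (mpMulVecReal_pdiag_le_maxCoord hd j).antisymm (hi ▸ le_mpMulVecReal_pdiag_of_ne hij.symm)

lemma mpMulVecReal_pdiag_eq_maxCoord_of_eq_zero {t : Fin n} (hdt : d t = 0) :
    mpMulVecReal (pdiag d) x t = maxCoord x := by
  refine congrArg _ (funext fun j => ?_)
  by_cases htj : t = j
  · subst htj
    simp [pdiag, hdt]
  · simp [pdiag, htj]

lemma mpMulVecReal_pdiag_const (hn : 2 ≤ n) (hd : ∀ i, d i ≤ 0) (c : ℝ) :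
    mpMulVecReal (pdiag d) (fun _ => c) = fun _ => c := by
  funext i
  obtain ⟨j, hji⟩ := Fintype.exists_ne_of_one_lt_card (by rw [Fintype.card_fin]; omega) i
  have hc : maxCoord (fun _ : Fin n => c) = c := maxCoord_eq_of_le (fun _ => le_rfl) (j := i) rfl
  exact (mpMulVecReal_pdiag_eq_maxCoord_of_ne hd hji hc.symm).trans hc

lemma mpMulVecReal_pdiag_twice (hd : ∀ i, d i ≤ 0) (hcase : 3 ≤ n ∨ ∃ t, d t = 0) :
    mpMulVecReal (pdiag d) (mpMulVecReal (pdiag d) x) = fun _ => maxCoord x := by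
  set y := mpMulVecReal (pdiag d) x
  have hy : ∀ j, y j ≤ maxCoord x := mpMulVecReal_pdiag_le_maxCoord hd
  funext j
  rcases hcase with hn | ⟨t, ht⟩
  · obtain ⟨i, hi⟩ := exists_eq_maxCoord x
    -- any third index `k` sees the maximum of `x` at `i`, and `j` sees it at `k`
    obtain ⟨k, hkj, hki⟩ : ∃ k, k ≠ j ∧ k ≠ i := by
      by_contra! h
      have : (univ : Finset (Fin n)) ⊆ {j, i} := fun k _ => by
        by_cases hkj : k = j
        · simp [hkj]
        · simp [h k hkj]
      have := (card_le_card this).trans card_le_two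
      simp at this
      omega
    have hyk : y k = maxCoord x := mpMulVecReal_pdiag_eq_maxCoord_of_ne hd hki.symm hi
    rw [← maxCoord_eq_of_le hy hyk]
    exact mpMulVecReal_pdiag_eq_maxCoord_of_ne hd hkj (hyk.trans (maxCoord_eq_of_le hy hyk).symm)
  · have hyt : y t = maxCoord x := mpMulVecReal_pdiag_eq_maxCoord_of_eq_zero ht
    rw [← maxCoord_eq_of_le hy hyt]
    by_cases hjt : j = t
    · exact hjt ▸ mpMulVecReal_pdiag_eq_maxCoord_of_eq_zero ht
    · exact mpMulVecReal_pdiag_eq_maxCoord_of_ne hd (Ne.symm hjt)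
        (hyt.trans (maxCoord_eq_of_le hy hyt).symm)

end PseudoDiagonal

def AttainsMaxOnTop (d : Fin n → ℝ) (t : Fin n) (x : Fin n → ℝ) : Prop :=
  ∃ i, d i = d t ∧ x i = maxCoord x

section TopLevel

variable {d : Fin n → ℝ} {t : Fin n} {x : Fin n → ℝ}

lemma mpMulVecReal_pdiag_eq_max (hnonneg : 0 ≤ d t) (hx : AttainsMaxOnTop d t x) (j : Fin n) :
    mpMulVecReal (pdiag d) x j = max (d j + x j) (maxCoord x) := by
  refine (mpMulVecReal_pdiag_le j).antisymm (max_le (add_le_mpMulVecReal_pdiag j) ?_)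
  obtain ⟨i, hdi, hxi⟩ := hx
  by_cases hij : i = j
  · subst hij
    linarith [add_le_mpMulVecReal_pdiag (d := d) (x := x) i]
  · exact hxi ▸ le_mpMulVecReal_pdiag_of_ne (Ne.symm hij)

lemma attainsMaxOnTop_mpMulVecReal (ht : ∀ j, d j ≤ d t) (hnonneg : 0 ≤ d t)
    (hx : AttainsMaxOnTop d t x) :
    AttainsMaxOnTop d t (mpMulVecReal (pdiag d) x) ∧
      maxCoord (mpMulVecReal (pdiag d) x) = maxCoord x + d t := by
  obtain ⟨i, hdi, hxi⟩ := hx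
  have hG := mpMulVecReal_pdiag_eq_max hnonneg ⟨i, hdi, hxi⟩
  have hle : ∀ j, mpMulVecReal (pdiag d) x j ≤ maxCoord x + d t := fun j => by
    rw [hG]
    exact max_le (by linarith [ht j, le_maxCoord x j]) (by linarith)
  have hi : mpMulVecReal (pdiag d) x i = maxCoord x + d t := by
    rw [hG, hdi, hxi, max_eq_left (by linarith)]
    ring
  have hmax := maxCoord_eq_of_le hle hi
  exact ⟨⟨i, hdi, hi.trans hmax.symm⟩, hmax⟩

lemma attainsMaxOnTop_iterate (ht : ∀ j, d j ≤ d t) (hnonneg : 0 ≤ d t)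
    (hx : AttainsMaxOnTop d t x) (k : ℕ) :
    AttainsMaxOnTop d t ((mpMulVecReal (pdiag d))^[k] x) ∧
      maxCoord ((mpMulVecReal (pdiag d))^[k] x) = maxCoord x + k * d t := by
  induction k with
  | zero => simpa using hx
  | succ k ih =>
    obtain ⟨hk, hmax⟩ := attainsMaxOnTop_mpMulVecReal ht hnonneg ih.1
    rw [Function.iterate_succ_apply', hmax, ih.2]
    exact ⟨hk, by push_cast; ring⟩

lemma iterate_succ_mpMulVecReal_pdiag (ht : ∀ j, d j ≤ d t) (hnonneg : 0 ≤ d t)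
    (hx : AttainsMaxOnTop d t x) (k : ℕ) (j : Fin n) :
    (mpMulVecReal (pdiag d))^[k + 1] x j = max (x j + (k + 1) * d j) (maxCoord x + k * d t) := by
  induction k with
  | zero => simp [mpMulVecReal_pdiag_eq_max hnonneg hx, add_comm]
  | succ k ih =>
    obtain ⟨hk, hmax⟩ := attainsMaxOnTop_iterate ht hnonneg hx (k + 1)
    rw [Function.iterate_succ_apply', mpMulVecReal_pdiag_eq_max hnonneg hk, ih, hmax]
    push_cast
    have hle : d j + (maxCoord x + k * d t) ≤ maxCoord x + (k + 1) * d t := by linarith [ht j]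
    rw [← max_add_add_left, max_assoc, max_eq_right hle]
    congr 1
    ring

lemma maxCoord_mpMulVecReal_pdiag_le (ht : ∀ j, d j ≤ d t) {c : ℝ} (hc0 : 0 ≤ c)
    (hc : ∀ j, d j < d t → d j ≤ c) (hx : ¬AttainsMaxOnTop d t (mpMulVecReal (pdiag d) x)) :
    maxCoord (mpMulVecReal (pdiag d) x) ≤ maxCoord x + c := by
  obtain ⟨j, hj⟩ := exists_eq_maxCoord (mpMulVecReal (pdiag d) x)
  have hdj : d j ≤ c := hc j ((ht j).lt_of_ne fun h => hx ⟨j, h, hj⟩)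
  rw [← hj]
  exact (mpMulVecReal_pdiag_le j).trans (max_le (by linarith [le_maxCoord x j]) (by linarith))

lemma exists_iterate_attainsMaxOnTop (ht : ∀ j, d j ≤ d t) (hpos : 0 < d t) (x : Fin n → ℝ) :
    ∃ k, AttainsMaxOnTop d t ((mpMulVecReal (pdiag d))^[k] x) := by
  obtain ⟨c, hc0, hct, hc⟩ : ∃ c, 0 ≤ c ∧ c < d t ∧ ∀ j, d j < d t → d j ≤ c := by
    have : ∀ᶠ c in 𝓝[<] (d t), 0 ≤ c ∧ ∀ j, d j < d t → d j ≤ c := by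
      refine eventually_nhdsWithin_of_eventually_nhds
        (((eventually_gt_nhds hpos).mono fun _ => le_of_lt).and (eventually_all.2 fun j => ?_))
      by_cases hj : d j < d t
      · exact (eventually_gt_nhds hj).mono fun _ h _ => h.le
      · exact .of_forall fun _ h => absurd h hj
    obtain ⟨c, ⟨hc0, hc⟩, hct⟩ := (this.and self_mem_nhdsWithin).exists
    exact ⟨c, hc0, hct, hc⟩
  by_contra! hnot
  -- Off the top level the maximum of the orbit grows at rate at most `c < d t`,
  -- while its `t`-th coordinate grows at rate `d t`.
  have hgrowth (k : ℕ) : x t + k * d t ≤ maxCoord x + k * c := by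
    have hmax : maxCoord ((mpMulVecReal (pdiag d))^[k] x) ≤ maxCoord x + k * c := by
      induction k with
      | zero => simp
      | succ k ih =>
        have := maxCoord_mpMulVecReal_pdiag_le ht hc0 hc
          (by simpa only [Function.iterate_succ_apply'] using hnot (k + 1))
        rw [Function.iterate_succ_apply']
        push_cast
        linarith
    linarith [add_mul_le_iterate_mpMulVecReal_pdiag (d := d) (x := x) k t,
      le_maxCoord ((mpMulVecReal (pdiag d))^[k] x) t]
  obtain ⟨k, hk⟩ := exists_nat_gt ((maxCoord x - x t) / (d t - c))
  rw [div_lt_iff₀ (sub_pos.2 hct)] at hk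
  linarith [hgrowth k]

lemma exists_iterate_eigen_of_pos (ht : ∀ j, d j ≤ d t) (hpos : 0 < d t) (x : Fin n → ℝ) :
    ∃ k, ∀ j, mpMulVecReal (pdiag d) ((mpMulVecReal (pdiag d))^[k] x) j =
      d t + (mpMulVecReal (pdiag d))^[k] x j := by
  obtain ⟨k₀, hk₀⟩ := exists_iterate_attainsMaxOnTop ht hpos x
  set y := (mpMulVecReal (pdiag d))^[k₀] x
  obtain ⟨k, hk⟩ : ∃ k : ℕ, ∀ j, d j < d t → d j ≤ k * (d t - d j) := by
    refine (eventually_all.2 fun j => ?_).exists (f := atTop)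
    by_cases hj : d j < d t
    · exact ((tendsto_natCast_atTop_atTop.atTop_mul_const (sub_pos.2 hj)).eventually_ge_atTop
        (d j)).mono fun _ h _ => h
    · exact .of_forall fun _ h => absurd h hj
  refine ⟨k + 1 + k₀, fun j => ?_⟩
  obtain ⟨hv, hmax⟩ := attainsMaxOnTop_iterate ht hpos.le hk₀ (k + 1)
  rw [Function.iterate_add_apply, mpMulVecReal_pdiag_eq_max hpos.le hv, hmax,
    iterate_succ_mpMulVecReal_pdiag ht hpos.le hk₀]
  push_cast
  rcases (ht j).eq_or_lt with hj | hj
  · rw [hj]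
    exact max_eq_left (by linarith [le_max_right (y j + (k + 1) * d t) (maxCoord y + k * d t)])
  · have hoff : y j + (k + 1) * d j ≤ maxCoord y + k * d t := by
      linarith [hk j hj, le_maxCoord y j]
    rw [max_eq_right hoff, max_eq_right (by linarith)]
    ring

lemma exists_iterate_eigen (hn : 2 ≤ n) (ht : ∀ j, d j ≤ d t) (hcase : 3 ≤ n ∨ 0 ≤ d t)
    (x : Fin n → ℝ) : ∃ k, ∃ l : ℝ, ∀ j, mpMulVecReal (pdiag d) ((mpMulVecReal (pdiag d))^[k] x) j =
      l + (mpMulVecReal (pdiag d))^[k] x j := by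
  rcases lt_or_ge 0 (d t) with hpos | hnonpos
  · obtain ⟨k, hk⟩ := exists_iterate_eigen_of_pos ht hpos x
    exact ⟨k, d t, hk⟩
  · have hd (j : Fin n) : d j ≤ 0 := (ht j).trans hnonpos
    have htwice : (mpMulVecReal (pdiag d))^[2] x = fun _ => maxCoord x :=
      mpMulVecReal_pdiag_twice hd (hcase.imp_right fun h => ⟨t, le_antisymm hnonpos h⟩)
    refine ⟨2, 0, fun j => ?_⟩
    rw [htwice, mpMulVecReal_pdiag_const hn hd, zero_add]

end TopLevel

section WithBot

variable {A : Fin n → Fin n → ℝ}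

lemma mpMulVec_coe (x : Fin n → ℝ) :
    mpMulVec A (fun j => (x j : WithBot ℝ)) = fun i => (mpMulVecReal A x i : WithBot ℝ) := by
  funext i
  rw [mpMulVecReal, coe_sup', ← sup'_eq_sup univ_nonempty]
  rfl

lemma iterate_mpMulVec_coe (x : Fin n → ℝ) (k : ℕ) :
    (mpMulVec A)^[k] (fun j => (x j : WithBot ℝ)) =
      fun i => ((mpMulVecReal A)^[k] x i : WithBot ℝ) := by
  induction k generalizing x with
  | zero => rfl
  | succ k ih => rw [Function.iterate_succ_apply, mpMulVec_coe, ih, Function.iterate_succ_apply]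

lemma coe_mem_eigenSet {v : Fin n → ℝ} {l : ℝ} (h : ∀ i, mpMulVecReal A v i = l + v i) :
    (fun i => (v i : WithBot ℝ)) ∈ eigenSet A := by
  refine Or.inr ⟨fun hbot => WithBot.coe_ne_bot (congrFun hbot 0), l, fun i => ?_⟩
  simp only [mpMulVec_coe, h i, WithBot.coe_add]

lemma exists_mpMulVec_eq_coe {x : Fin n → WithBot ℝ} (hx : x ≠ fun _ => ⊥) :
    ∃ y : Fin n → ℝ, mpMulVec A x = fun i => (y i : WithBot ℝ) := by
  obtain ⟨j, hj⟩ : ∃ j, x j ≠ ⊥ := by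
    by_contra! h
    exact hx (funext h)
  have hne (i : Fin n) : mpMulVec A x i ≠ ⊥ :=
    ne_bot_of_le_ne_bot (WithBot.add_ne_bot.2 ⟨WithBot.coe_ne_bot, hj⟩)
      (le_sup' (fun j => (A i j : WithBot ℝ) + x j) (mem_univ j))
  choose y hy using fun i => WithBot.ne_bot_iff_exists.1 (hne i)
  exact ⟨y, funext fun i => (hy i).symm⟩

lemma attrSet_eq_univ_of_forall_coe
    (h : ∀ y : Fin n → ℝ, ∃ k, ∃ l : ℝ, ∀ i,
      mpMulVecReal A ((mpMulVecReal A)^[k] y) i = l + (mpMulVecReal A)^[k] y i) :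
    attrSet A = Set.univ := by
  refine Set.eq_univ_of_forall fun x => ?_
  by_cases hx : x = fun _ => ⊥
  · exact ⟨0, Or.inl hx⟩
  obtain ⟨y, hy⟩ := exists_mpMulVec_eq_coe hx
  obtain ⟨k, l, hk⟩ := h y
  refine ⟨k + 1, ?_⟩
  rw [Function.iterate_succ_apply, hy, iterate_mpMulVec_coe]
  exact coe_mem_eigenSet hk

lemma notMem_eigenSet_of_lt {x : Fin n → WithBot ℝ} {i j : Fin n} (hx : x i < x j)
    (hAx : mpMulVec A x j < mpMulVec A x i) : x ∉ eigenSet A := by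
  rintro (hbot | ⟨-, l, hl⟩)
  · simp [hbot] at hx
  · rw [hl, hl] at hAx
    exact hAx.not_ge (by gcongr)

end WithBot

section TwoByTwo

variable {d : Fin 2 → ℝ}

lemma mpMulVec_pdiag_two (x : Fin 2 → WithBot ℝ) {i j : Fin 2} (hij : i ≠ j) :
    mpMulVec (pdiag d) x i = ((d i : WithBot ℝ) + x i) ⊔ x j := by
  fin_cases i <;> fin_cases j <;> simp_all [mpMulVec, pdiag, Fin.univ_succ, max_comm]

lemma mpMulVec_pdiag_two_lt (hd : ∀ i, d i < 0) {x : Fin 2 → WithBot ℝ} {i j : Fin 2}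
    (h : x i < x j) : mpMulVec (pdiag d) x j < mpMulVec (pdiag d) x i := by
  have hij : i ≠ j := fun hij => h.ne (congrArg x hij)
  rw [mpMulVec_pdiag_two x hij, mpMulVec_pdiag_two x hij.symm]
  refine (sup_lt_iff.2 ⟨?_, h⟩).trans_le le_sup_right
  obtain ⟨b, hb⟩ := WithBot.ne_bot_iff_exists.1 (bot_le.trans_lt h).ne'
  rw [← hb]
  exact_mod_cast (by linarith [hd j] : d j + b < b)

lemma attrSet_pdiag_two (hd : ∀ i, d i < 0) :
    attrSet (pdiag d) = {x | ∀ i j, x i = x j} := by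
  ext x
  constructor
  · rintro ⟨k, hk⟩
    by_contra hx
    simp only [Set.mem_ofPred_eq, not_forall] at hx
    obtain ⟨i, j, hij⟩ : ∃ i j, x i < x j := by
      obtain ⟨i, j, hne⟩ := hx
      exact (Ne.lt_or_gt hne).elim (fun h => ⟨i, j, h⟩) fun h => ⟨j, i, h⟩
    have horbit (k : ℕ) : ∃ i j, (mpMulVec (pdiag d))^[k] x i < (mpMulVec (pdiag d))^[k] x j := by
      induction k with
      | zero => exact ⟨i, j, hij⟩
      | succ k ih =>
        obtain ⟨i, j, h⟩ := ih
        rw [Function.iterate_succ_apply']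
        exact ⟨j, i, mpMulVec_pdiag_two_lt hd h⟩
    obtain ⟨i, j, h⟩ := horbit k
    exact notMem_eigenSet_of_lt h (mpMulVec_pdiag_two_lt hd h) hk
  · intro hx
    refine ⟨0, ?_⟩
    rw [show x = fun _ => x 0 from funext fun i => hx i 0]
    induction x 0 using WithBot.recBotCoe with
    | bot => exact Or.inl rfl
    | coe c =>
      refine coe_mem_eigenSet (v := fun _ => c) (l := 0) fun i => ?_
      rw [mpMulVecReal_pdiag_const le_rfl (fun i => (hd i).le), zero_add]

end TwoByTwo

end

/-- Let `D = pdiag(d₁, …, dₙ)` with `d₁ ≤ … ≤ dₙ`, `n ≥ 2`.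
If `n = 2` and `dₙ < 0`, then `attr(D)` consists exactly of the vectors with all
coordinates equal, and `D` is not strongly stable; in all other cases `D` is strongly
stable, i.e. `attr(D)` is everything. -/
theorem attr_pseudoDiagonal {n : ℕ} [NeZero n] (hn : 2 ≤ n)
    (d : Fin n → ℝ) (hmono : Monotone d)
    (D : Fin n → Fin n → ℝ)
    (hD : ∀ i j, D i j = if i = j then d i else 0) :
    ((n = 2 ∧ d ⟨n - 1, by omega⟩ < 0) →
        attrSet D = {x | ∀ i j : Fin n, x i = x j} ∧ attrSet D ≠ Set.univ) ∧
    (¬(n = 2 ∧ d ⟨n - 1, by omega⟩ < 0) → attrSet D = Set.univ) := by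
  obtain rfl : D = pdiag d := funext fun i => funext (hD i)
  have htop (j : Fin n) : d j ≤ d ⟨n - 1, by omega⟩ := hmono (Fin.le_def.2 (by simp; omega))
  refine ⟨fun ⟨hn2, hneg⟩ => ?_, fun hcase => ?_⟩
  · subst hn2
    have hattr := attrSet_pdiag_two fun i => (htop i).trans_lt hneg
    refine ⟨hattr, fun huniv => ?_⟩
    have : ![⊥, 0] ∈ attrSet (pdiag d) := huniv ▸ trivial
    rw [hattr] at this
    simpa using this 0 1
  · refine attrSet_eq_univ_of_forall_coe (exists_iterate_eigen hn htop ?_)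
    by_contra! h
    exact hcase ⟨by omega, h.2⟩
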